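/- There exists a finite rotation-puzzle instance 𝒜 over the three-color tile set T_3 (the TEST-true subpuzzle, checking that a circuit evaluates to true) with one designated input boundary edge at its bottom, such that 𝒜 has exactly one solution, and this solution has color blue at the input edge; in particular no solution of 𝒜 has color red or yellow at the input edge. -/

import Mathlib

/-- The three Tantrix colors used in the three-color tile set. -/
inductive Color where
  | red
  | yellow
  | blue
deriving DecidableEq

/-- A tile is its clockwise color sequence: a word of length 6 over the colors,
edges indexed `0, …, 5` clockwise. -/
abbrev Tile := Fin 6 → Color

/-- Cyclic rotation of a tile by `k` steps: edge `i` of the rotated tile carries the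
color of edge `i + k` of the original sequence. -/
def rotTile (k : Fin 6) (t : Tile) : Tile := fun i => t (i + k)

open Color in
/-- The three-color tile set `T₃`, consisting of the 14 color sequences
yrrbby, ryybbr, yrrybb, ryyrbb, brrbyy, yrbybr, rbyryb, brybyr, brbyyr, bybrry,
ryrbby, rbryyb, ybyrrb, yrybbr. -/
def T3 : Set Tile :=
  { ![yellow,red,red,blue,blue,yellow],
    ![red,yellow,yellow,blue,blue,red],
    ![yellow,red,red,yellow,blue,blue],
    ![red,yellow,yellow,red,blue,blue],
    ![blue,red,red,blue,yellow,yellow],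
    ![yellow,red,blue,yellow,blue,red],
    ![red,blue,yellow,red,yellow,blue],
    ![blue,red,yellow,blue,yellow,red],
    ![blue,red,blue,yellow,yellow,red],
    ![blue,yellow,blue,red,red,yellow],
    ![red,yellow,red,blue,blue,yellow],
    ![red,blue,red,yellow,yellow,blue],
    ![yellow,blue,yellow,red,red,blue],
    ![yellow,red,yellow,blue,blue,red] }

/-- The six neighbor offsets of the hexagonal layout of `ℤ²`, listed clockwise
starting from straight up; edge `i` of a tile at `x` is the edge shared with the
neighboring point `x + dirs i`, and opposite directions differ by `3` (mod 6).
Two points are neighbors exactly if their difference is one of these offsets. -/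
def dirs : Fin 6 → ℤ × ℤ := ![(0,1), (1,1), (1,0), (0,-1), (-1,-1), (-1,0)]

/-- A finite rotation-puzzle instance over the tile set `T3`:
a function from a finite set of points of `ℤ²` to `T3`. -/
structure Puzzle where
  tiles : ℤ × ℤ → Option Tile
  finite : {x | tiles x ≠ none}.Finite
  memT3 : ∀ x t, tiles x = some t → t ∈ T3

/-- `sol` is a solution of the instance `P`: it assigns to each occupied point a
cyclic rotation of the tile placed there, such that for every pair of neighboring
occupied points the two assigned sequences give the same color to their joint edge
(edge `d` of the tile at `x` is glued to edge `d + 3` of the tile at `x + dirs d`). -/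
def IsSolution (P : Puzzle) (sol : ℤ × ℤ → Option Tile) : Prop :=
  (∀ x, (P.tiles x = none → sol x = none) ∧
    (∀ t, P.tiles x = some t → ∃ k : Fin 6, sol x = some (rotTile k t))) ∧
  (∀ (x : ℤ × ℤ) (d : Fin 6) (s s' : Tile),
    sol x = some s → sol (x + dirs d) = some s' → s d = s' (d + 3))

/-- `(x, d)` is a boundary edge of `P`: the point `x` is occupied and its
neighbor in direction `d` is not. -/
def IsBoundary (P : Puzzle) (x : ℤ × ℤ) (d : Fin 6) : Prop :=
  P.tiles x ≠ none ∧ P.tiles (x + dirs d) = none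

/-- The solution `sol` has color `c` at the edge in direction `d` of the tile at `x`. -/
def SolColor (sol : ℤ × ℤ → Option Tile) (x : ℤ × ℤ) (d : Fin 6) (c : Color) : Prop :=
  ∃ s, sol x = some s ∧ s d = c

/-!
A solution can only rotate tiles, and only the rotations at the four occupied cells
matter. The four cells share five edges, and among the `6⁴` choices of rotations
exactly one makes all five edges match; it turns the tile at `(0, 2)` so that its
bottom edge is blue. Uniqueness then also excludes red and yellow at that edge.
-/

namespace Puzzle

variable (P : Puzzle)

def rotate (k : ℤ × ℤ → Fin 6) : ℤ × ℤ → Option Tile :=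
  fun x => (P.tiles x).map (rotTile (k x))

def Matches (k : ℤ × ℤ → Fin 6) : Prop :=
  ∀ x d, ∀ t ∈ P.tiles x, ∀ t' ∈ P.tiles (x + dirs d),
    rotTile (k x) t d = rotTile (k (x + dirs d)) t' (d + 3)

variable {P}

theorem rotate_congr {k k' : ℤ × ℤ → Fin 6} (h : ∀ x, P.tiles x ≠ none → k x = k' x) :
    P.rotate k = P.rotate k' := by
  funext x
  cases ht : P.tiles x with
  | none => simp [rotate, ht]
  | some t => simp [rotate, ht, h x (by simp [ht])]

theorem isSolution_rotate_iff {k : ℤ × ℤ → Fin 6} : IsSolution P (P.rotate k) ↔ P.Matches k := by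
  constructor
  · rintro ⟨-, hedge⟩ x d t ht t' ht'
    exact hedge x d _ _ (by simp [rotate, Option.mem_def.1 ht])
      (by simp [rotate, Option.mem_def.1 ht'])
  · refine fun hm => ⟨fun x => ⟨fun ht => by simp [rotate, ht],
      fun t ht => ⟨k x, by simp [rotate, ht]⟩⟩, fun x d s s' hs hs' => ?_⟩
    obtain ⟨t, ht, rfl⟩ := Option.map_eq_some_iff.1 hs
    obtain ⟨t', ht', rfl⟩ := Option.map_eq_some_iff.1 hs'
    exact hm x d t ht t' ht'

theorem matches_iff_of_support {S : Finset (ℤ × ℤ)} (hS : ∀ x, P.tiles x ≠ none → x ∈ S)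
    {k : ℤ × ℤ → Fin 6} :
    P.Matches k ↔ ∀ x ∈ S, ∀ d, ∀ t ∈ P.tiles x, ∀ t' ∈ P.tiles (x + dirs d),
      rotTile (k x) t d = rotTile (k (x + dirs d)) t' (d + 3) :=
  ⟨fun h x _ => h x, fun h x d t ht => h x (hS x (by simp [Option.mem_def.1 ht])) d t ht⟩

end Puzzle

theorem IsSolution.exists_eq_rotate {P : Puzzle} {sol : ℤ × ℤ → Option Tile}
    (h : IsSolution P sol) : ∃ k, sol = P.rotate k := by
  have hrot : ∀ x, ∃ k : Fin 6, sol x = (P.tiles x).map (rotTile k) := by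
    intro x
    cases ht : P.tiles x with
    | none => exact ⟨0, (h.1 x).1 ht⟩
    | some t => exact (h.1 x).2 t ht
  choose k hk using hrot
  exact ⟨k, funext hk⟩

theorem SolColor.unique {sol : ℤ × ℤ → Option Tile} {x : ℤ × ℤ} {d : Fin 6} {c c' : Color}
    (h : SolColor sol x d c) (h' : SolColor sol x d c') : c = c' := by
  obtain ⟨s, hs, rfl⟩ := h
  obtain ⟨s', hs', rfl⟩ := h'
  rw [Option.some.inj (hs.symm.trans hs')]

open Color

def testTrueCells : Finset (ℤ × ℤ) := {(0, 2), (0, 3), (1, 3), (1, 2)}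

def testTrueTiles (x : ℤ × ℤ) : Option Tile :=
  if x = (0, 2) then some ![yellow, red, red, blue, blue, yellow]
  else if x = (0, 3) then some ![blue, red, red, blue, yellow, yellow]
  else if x = (1, 3) then some ![blue, yellow, blue, red, red, yellow]
  else if x = (1, 2) then some ![yellow, red, yellow, blue, blue, red]
  else none

theorem mem_testTrueCells_of_testTrueTiles_ne_none {x : ℤ × ℤ} (h : testTrueTiles x ≠ none) :
    x ∈ testTrueCells := by
  contrapose! h
  simp only [testTrueCells, Finset.mem_insert, Finset.mem_singleton, not_or] at h
  simp [testTrueTiles, h]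

def testTrue : Puzzle where
  tiles := testTrueTiles
  finite := testTrueCells.finite_toSet.subset fun _ => mem_testTrueCells_of_testTrueTiles_ne_none
  memT3 x t h := by
    simp only [testTrueTiles] at h
    split_ifs at h <;> cases h <;> simp [T3]

def testTrueRot (k₀ k₁ k₂ k₃ : Fin 6) (x : ℤ × ℤ) : Fin 6 :=
  if x = (0, 2) then k₀ else if x = (0, 3) then k₁ else if x = (1, 3) then k₂ else k₃

theorem testTrue_matches_iff {k₀ k₁ k₂ k₃ : Fin 6} :
    testTrue.Matches (testTrueRot k₀ k₁ k₂ k₃) ↔ k₀ = 1 ∧ k₁ = 5 ∧ k₂ = 5 ∧ k₃ = 4 := by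
  rw [Puzzle.matches_iff_of_support fun _ => mem_testTrueCells_of_testTrueTiles_ne_none]
  revert k₀ k₁ k₂ k₃
  decide

theorem testTrue_isSolution_iff {sol : ℤ × ℤ → Option Tile} :
    IsSolution testTrue sol ↔ sol = testTrue.rotate (testTrueRot 1 5 5 4) := by
  constructor
  · intro h
    obtain ⟨k, rfl⟩ := h.exists_eq_rotate
    have hk : ∀ x, testTrue.tiles x ≠ none →
        k x = testTrueRot (k (0, 2)) (k (0, 3)) (k (1, 3)) (k (1, 2)) x := by
      intro x hx
      have hx := mem_testTrueCells_of_testTrueTiles_ne_none hx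
      simp only [testTrueCells, Finset.mem_insert, Finset.mem_singleton] at hx
      rcases hx with rfl | rfl | rfl | rfl <;> rfl
    rw [Puzzle.rotate_congr hk] at h ⊢
    obtain ⟨h0, h1, h2, h3⟩ := testTrue_matches_iff.1 (Puzzle.isSolution_rotate_iff.1 h)
    rw [h0, h1, h2, h3]
  · rintro rfl
    exact Puzzle.isSolution_rotate_iff.2 (testTrue_matches_iff.2 ⟨rfl, rfl, rfl, rfl⟩)

/-- the three-color TEST-true subpuzzle: one input boundary edge at the bottom; the instance has exactly one solution, which has color blue at the input edge; in particular no solution has color red or yellow there. -/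
theorem three_color_TEST_true_subpuzzle :
    ∃ (P : Puzzle) (xIn : ℤ × ℤ),
      IsBoundary P xIn 3 ∧
      ∃ sol : ℤ × ℤ → Option Tile,
        IsSolution P sol ∧ (∀ sol' : ℤ × ℤ → Option Tile, IsSolution P sol' → sol' = sol) ∧
        SolColor sol xIn 3 Color.blue ∧
        (∀ sol' : ℤ × ℤ → Option Tile, IsSolution P sol' →
          ¬ SolColor sol' xIn 3 Color.red ∧ ¬ SolColor sol' xIn 3 Color.yellow) := by
  have hblue : SolColor (testTrue.rotate (testTrueRot 1 5 5 4)) (0, 2) 3 blue := ⟨_, rfl, rfl⟩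
  refine ⟨testTrue, (0, 2), ⟨by decide, by decide⟩, _, testTrue_isSolution_iff.2 rfl,
    fun _ => testTrue_isSolution_iff.1, hblue, fun sol' h => ?_⟩
  rw [testTrue_isSolution_iff.1 h]
  exact ⟨fun hred => (nomatch SolColor.unique hred hblue),
    fun hyellow => (nomatch SolColor.unique hyellow hblue)⟩
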